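/- arXiv:2102.01623 — 7 statements merged into one kernel-verified Lean document; each statement's English description precedes it below -/
import Mathlib

section
/- Let λ ≥ 0, γ ≥ 0, and let β, β' ∈ ℝ satisfy |λβ'| ≤ 1/2 and |g + γ + λ|·β ≤ 1/2 for a real g, with β ≥ 0. Then for any W > 0, the equation W' = (1 - gβ - γβ)W - λ|βW - β'W'| in the unknown W' has a unique solution, and this solution is positive. -/
/-- Well-posedness of the movement-aware wealth update: the fixed-point equation
`W' = (1 - g·β - γ·β)·W - λ·|β·W - β'·W'|` has a unique solution, and it is positive. -/
theorem stmt0 (lam γ g β β' W : ℝ)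
    (hlam : 0 ≤ lam) (hγ : 0 ≤ γ)
    (hβ' : |lam * β'| ≤ 1/2)
    (hβg : |g + γ + lam| * β ≤ 1/2)
    (hβpos : 0 ≤ β) (hW : 0 < W) :
    ∃ W' : ℝ,
      W' = (1 - g * β - γ * β) * W - lam * |β * W - β' * W'| ∧
      0 < W' ∧
      ∀ W'' : ℝ, W'' = (1 - g * β - γ * β) * W - lam * |β * W - β' * W''| → W'' = W' := by
  set C : ℝ := (1 - g * β - γ * β) * W with hCdef
  set a : ℝ := lam * β' with hadef
  set b : ℝ := lam * (β * W) with hbdef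
  obtain ⟨ha1, ha2⟩ := abs_le.mp hβ'
  have hgl : (g + γ + lam) * β ≤ 1/2 :=
    le_trans (mul_le_mul_of_nonneg_right (le_abs_self _) hβpos) hβg
  have hb : 0 ≤ b := by positivity
  have hCb : W/2 ≤ C - b := by
    have : C - b = (1 - (g + γ + lam) * β) * W := by ring
    rw [this]
    nlinarith
  have habs : lam * |β'| = |a| := by rw [hadef, abs_mul, abs_of_nonneg hlam]
  -- positivity of any solution
  have hpos : ∀ x : ℝ, x = C - lam * |β * W - β' * x| → 0 < x := by
    intro x hx
    have h1 : |β * W - β' * x| ≤ β * W + |β'| * |x| := by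
      calc |β * W - β' * x| ≤ |β * W| + |β' * x| := abs_sub _ _
        _ = β * W + |β'| * |x| := by
            rw [abs_mul β' x, abs_of_nonneg (by positivity : (0:ℝ) ≤ β * W)]
    have h2 : lam * |β * W - β' * x| ≤ b + |a| * |x| := by
      have := mul_le_mul_of_nonneg_left h1 hlam
      calc lam * |β * W - β' * x| ≤ lam * (β * W + |β'| * |x|) := this
        _ = b + (lam * |β'|) * |x| := by ring
        _ = b + |a| * |x| := by rw [habs]
    have hxa : |a| * |x| ≤ (1/2) * |x| :=
      mul_le_mul_of_nonneg_right (abs_le.mpr ⟨ha1, ha2⟩) (abs_nonneg _)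
    rcases abs_cases x with ⟨h, _⟩ | ⟨h, _⟩ <;> nlinarith
  -- existence
  have hxex : ∃ x : ℝ, x = C - lam * |β * W - β' * x| := by
    rcases le_or_gt (β' * C) (β * W) with h | h
    · refine ⟨(C - b) / (1 - a), ?_⟩
      have h1a : (0:ℝ) < 1 - a := by linarith
      have hnn : 0 ≤ β * W - β' * ((C - b) / (1 - a)) := by
        rw [sub_nonneg, mul_div_assoc', div_le_iff₀ h1a]
        have : β' * b = a * (β * W) := by rw [hadef, hbdef]; ring
        nlinarith
      rw [abs_of_nonneg hnn]
      field_simp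
      ring
    · refine ⟨(C + b) / (1 + a), ?_⟩
      have h1a : (0:ℝ) < 1 + a := by linarith
      have hnp : β * W - β' * ((C + b) / (1 + a)) ≤ 0 := by
        rw [sub_nonpos, mul_div_assoc', le_div_iff₀ h1a]
        have : β' * b = a * (β * W) := by rw [hadef, hbdef]; ring
        nlinarith
      rw [abs_of_nonpos hnp]
      field_simp
      ring
  obtain ⟨x, hx⟩ := hxex
  refine ⟨x, hx, hpos x hx, ?_⟩
  intro y hy
  have hd : y - x = lam * |β * W - β' * x| - lam * |β * W - β' * y| := by
    linarith
  have h1 : |y - x| ≤ lam * |(β * W - β' * x) - (β * W - β' * y)| := by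
    rw [hd, ← mul_sub, abs_mul, abs_of_nonneg hlam]
    exact mul_le_mul_of_nonneg_left (abs_abs_sub_abs_le_abs_sub _ _) hlam
  have h2 : lam * |(β * W - β' * x) - (β * W - β' * y)| = |a| * |y - x| := by
    have : (β * W - β' * x) - (β * W - β' * y) = β' * (y - x) := by ring
    rw [this, abs_mul, ← mul_assoc, habs]
  rw [h2] at h1
  have hxa : |a| * |y - x| ≤ (1/2) * |y - x| :=
    mul_le_mul_of_nonneg_right (abs_le.mpr ⟨ha1, ha2⟩) (abs_nonneg _)
  have : |y - x| ≤ 0 := by linarith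
  have := abs_nonneg (y - x)
  have : |y - x| = 0 := le_antisymm ‹|y - x| ≤ 0› this
  have := abs_eq_zero.mp this
  linarith
end

section
/- Fix C > 0 and G > 0 with G ≤ C. Let g : ℕ → ℝ with |g t| ≤ G for all t. Define for t ≥ 1: hatβ(t+1) = -(∑_{i=1}^t g i)/(2C²t), and β(t+1) = the projection of hatβ(t+1) onto the interval [0, 1/(C√(2t))], with β(1) = 0. Then for all t ≥ 1, |β(t+1) - β(t)| ≤ 2/(C·t). -/
/-!
The unprojected iterate is `-(running average of g) / (2C²)`, and a running average of
terms bounded by `G` moves by at most `2G/(t+1)` per step, so the iterate moves by at most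
`G/(C²(t+1)) ≤ 1/(C(t+1))`. The cap `1/(C√(2t))` moves by at most `1/(C(t+1))`. Clamping to `[0, cap]` is
`1`-Lipschitz in the point and in the cap, so the two movements add up to `2/(Ct)`.
-/

open Finset

section Clamp

variable {α : Type*} [AddCommGroup α] [LinearOrder α] [IsOrderedAddMonoid α]

theorem abs_max_zero_min_sub_max_zero_min_le (a b x y : α) :
    |max 0 (min a x) - max 0 (min b y)| ≤ |a - b| + |x - y| :=
  calc |max 0 (min a x) - max 0 (min b y)|
      ≤ max |(0 : α) - 0| |min a x - min b y| := abs_max_sub_max_le_max _ _ _ _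
    _ = |min a x - min b y| := by rw [sub_self, abs_zero, max_eq_right (abs_nonneg _)]
    _ ≤ max |a - b| |x - y| := abs_min_sub_min_le_max _ _ _ _
    _ ≤ |a - b| + |x - y| := max_le_add_of_nonneg (abs_nonneg _) (abs_nonneg _)

end Clamp

theorem abs_sum_Icc_le_mul {f : ℕ → ℝ} {G : ℝ} (hf : ∀ i, |f i| ≤ G) (n : ℕ) :
    |∑ i ∈ Icc 1 n, f i| ≤ G * n :=
  calc |∑ i ∈ Icc 1 n, f i| ≤ ∑ i ∈ Icc 1 n, |f i| := abs_sum_le_sum_abs _ _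
    _ ≤ ∑ _i ∈ Icc 1 n, G := sum_le_sum fun i _ ↦ hf i
    _ = G * n := by simp [mul_comm]

theorem abs_div_succ_sub_div_le {S x G n : ℝ} (hn : 0 < n) (hS : |S| ≤ G * n) (hx : |x| ≤ G) :
    |(S + x) / (n + 1) - S / n| ≤ 2 * G / (n + 1) := by
  have hdiff : (S + x) / (n + 1) - S / n = (x * n - S) / (n * (n + 1)) := by
    field_simp
    ring
  have hnum : |x * n - S| ≤ 2 * G * n :=
    calc |x * n - S| ≤ |x * n| + |S| := abs_sub _ _
      _ = |x| * n + |S| := by rw [abs_mul, abs_of_pos hn]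
      _ ≤ G * n + G * n := by gcongr
      _ = 2 * G * n := by ring
  have hden : 0 < n * (n + 1) := by positivity
  rw [hdiff, abs_div, abs_of_pos hden, div_le_div_iff₀ hden (by positivity)]
  nlinarith [mul_le_mul_of_nonneg_right hnum (by positivity : 0 ≤ n + 1)]

theorem one_div_sqrt_sub_one_div_sqrt_succ_le {n : ℝ} (hn : 1 ≤ n) :
    1 / Real.sqrt (2 * n) - 1 / Real.sqrt (2 * (n + 1)) ≤ 1 / (n + 1) := by
  set u := Real.sqrt (2 * n)
  set v := Real.sqrt (2 * (n + 1))
  have hu2 : u ^ 2 = 2 * n := Real.sq_sqrt (by linarith)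
  have hv2 : v ^ 2 = 2 * (n + 1) := Real.sq_sqrt (by linarith)
  have hu1 : 1 ≤ u := Real.one_le_sqrt.mpr (by linarith)
  have huv : u ≤ v := Real.sqrt_le_sqrt (by linarith)
  rw [div_sub_div _ _ (by positivity) (by positivity), div_le_div_iff₀ (by positivity) (by positivity)]
  nlinarith [mul_le_mul_of_nonneg_left huv (by linarith : (0 : ℝ) ≤ u)]

section BettingFraction

variable (C : ℝ) (g : ℕ → ℝ)

/-- The paper's `hatβ(t+1)` (indexed by `t`, not `t + 1`). -/
noncomputable def ftlFraction (t : ℕ) : ℝ := -(∑ i ∈ Icc 1 t, g i) / (2 * C ^ 2 * t)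

noncomputable def fractionCap (t : ℕ) : ℝ := 1 / (C * Real.sqrt (2 * t))

variable {C g}

theorem abs_ftlFraction_succ_sub_le {G : ℝ} (hC : 0 < C) (hGC : G ≤ C) (hg : ∀ t, |g t| ≤ G)
    {t : ℕ} (ht : 1 ≤ t) :
    |ftlFraction C g (t + 1) - ftlFraction C g t| ≤ 1 / (C * (t + 1)) := by
  have htR : (0 : ℝ) < t := by exact_mod_cast ht
  have havg := abs_div_succ_sub_div_le htR (abs_sum_Icc_le_mul hg t) (hg (t + 1))
  have hrw : ftlFraction C g (t + 1) - ftlFraction C g t =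
      -(1 / (2 * C ^ 2)) * ((∑ i ∈ Icc 1 t, g i + g (t + 1)) / (t + 1) - (∑ i ∈ Icc 1 t, g i) / t) := by
    rw [ftlFraction, ftlFraction, sum_Icc_succ_top (by omega)]
    push_cast
    field_simp
    ring
  calc |ftlFraction C g (t + 1) - ftlFraction C g t|
      ≤ 1 / (2 * C ^ 2) * (2 * G / (t + 1)) := by
        rw [hrw, abs_mul, abs_neg, abs_of_pos (by positivity)]
        gcongr
    _ = G / C * (1 / (C * (t + 1))) := by field_simp
    _ ≤ 1 * (1 / (C * (t + 1))) := by gcongr; exact (div_le_one hC).mpr hGC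
    _ = 1 / (C * (t + 1)) := one_mul _

theorem abs_fractionCap_succ_sub_le (hC : 0 < C) {t : ℕ} (ht : 1 ≤ t) :
    |fractionCap C (t + 1) - fractionCap C t| ≤ 1 / (C * (t + 1)) := by
  have htR : (1 : ℝ) ≤ t := by exact_mod_cast ht
  have hmono : fractionCap C (t + 1) ≤ fractionCap C t := by
    unfold fractionCap
    gcongr
    linarith
  rw [abs_sub_comm, abs_of_nonneg (sub_nonneg.mpr hmono)]
  calc fractionCap C t - fractionCap C (t + 1)
      = 1 / C * (1 / Real.sqrt (2 * t) - 1 / Real.sqrt (2 * (t + 1))) := by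
        unfold fractionCap
        push_cast
        field_simp
    _ ≤ 1 / C * (1 / (t + 1)) := by gcongr; exact one_div_sqrt_sub_one_div_sqrt_succ_le htR
    _ = 1 / (C * (t + 1)) := by field_simp

end BettingFraction

theorem stmt1_general (C G : ℝ) (hC : 0 < C) (hGC : G ≤ C)
    (g : ℕ → ℝ) (hg : ∀ t, |g t| ≤ G)
    (β : ℕ → ℝ) (hβ1 : β 1 = 0)
    (hβ : ∀ t : ℕ, 1 ≤ t →
      β (t + 1) = max 0 (min (1 / (C * Real.sqrt (2 * (t : ℝ))))
        (-(∑ i ∈ Finset.Icc 1 t, g i) / (2 * C ^ 2 * (t : ℝ))))) :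
    ∀ t : ℕ, 1 ≤ t → |β (t + 1) - β t| ≤ 2 / (C * (t : ℝ)) := by
  intro t ht
  obtain rfl | ⟨s, hs, rfl⟩ : t = 1 ∨ ∃ s, 1 ≤ s ∧ t = s + 1 :=
    (Nat.lt_or_ge t 2).imp (by omega) fun h ↦ ⟨t - 1, by omega, by omega⟩
  · have hcap : fractionCap C 1 ≤ 2 / (C * (1 : ℕ)) := by
      rw [fractionCap, Nat.cast_one, mul_one, mul_one, div_le_div_iff₀ (by positivity) hC]
      nlinarith [Real.one_le_sqrt.mpr (by norm_num : (1 : ℝ) ≤ 2)]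
    rw [hβ 1 le_rfl, hβ1, sub_zero, abs_of_nonneg (le_max_left _ _)]
    exact (max_le (by positivity) (min_le_left _ (ftlFraction C g 1))).trans hcap
  · rw [hβ (s + 1) (by omega), hβ s hs]
    change |max 0 (min (fractionCap C (s + 1)) (ftlFraction C g (s + 1))) -
      max 0 (min (fractionCap C s) (ftlFraction C g s))| ≤ _
    calc _ ≤ _ := abs_max_zero_min_sub_max_zero_min_le _ _ _ _
      _ ≤ 1 / (C * (s + 1)) + 1 / (C * (s + 1)) :=
        add_le_add (abs_fractionCap_succ_sub_le hC hs) (abs_ftlFraction_succ_sub_le hC hGC hg hs)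
      _ = 2 / (C * ↑(s + 1)) := by push_cast; ring

/-- The projected betting fractions move slowly: `|β (t+1) - β t| ≤ 2/(C t)`. -/
theorem stmt1 (C G : ℝ) (hC : 0 < C) (hG : 0 < G) (hGC : G ≤ C)
    (g : ℕ → ℝ) (hg : ∀ t, |g t| ≤ G)
    (β : ℕ → ℝ) (hβ1 : β 1 = 0)
    (hβ : ∀ t : ℕ, 1 ≤ t →
      β (t + 1) = max 0 (min (1 / (C * Real.sqrt (2 * (t : ℝ))))
        (-(∑ i ∈ Finset.Icc 1 t, g i) / (2 * C ^ 2 * (t : ℝ))))) :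
    ∀ t : ℕ, 1 ≤ t → |β (t + 1) - β t| ≤ 2 / (C * (t : ℝ)) :=
  stmt1_general C G hC hGC g hg β hβ1 hβ
end

section
/- Let V ⊆ ℝ^d be a nonempty closed convex set, x̃ ∈ ℝ^d, x = Π_V(x̃) the Euclidean projection, and g ∈ ℝ^d. Define the surrogate loss h(z) = ⟨g, z⟩ if ⟨g, x̃⟩ ≥ ⟨g, x⟩, and h(z) = ⟨g, z⟩ + ⟨g, x - x̃⟩·‖z - Π_V(z)‖/‖x - x̃‖ otherwise. Then: (1) h is convex on ℝ^d; (2) every subgradient g̃ ∈ ∂h(x̃) satisfies ‖g̃‖ ≤ ‖g‖; (3) for all u ∈ V, ⟨g, x - u⟩ ≤ ⟨g̃, x̃ - u⟩. -/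
open scoped RealInnerProductSpace

set_option maxHeartbeats 1000000 in
/-- The constraint-reduction surrogate loss (Cutkosky 2020): it is convex, its
subgradients at `x̃` are no larger than `g`, and linear regret through it dominates
the constrained linear regret. -/
theorem stmt14 {d : ℕ} (V : Set (EuclideanSpace ℝ (Fin d)))
    (hne : V.Nonempty) (hcl : IsClosed V) (hconv : Convex ℝ V)
    (proj : EuclideanSpace ℝ (Fin d) → EuclideanSpace ℝ (Fin d))
    (hproj : ∀ z, proj z ∈ V ∧ ∀ v ∈ V, dist z (proj z) ≤ dist z v)
    (xt g : EuclideanSpace ℝ (Fin d)) :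
    ConvexOn ℝ Set.univ (fun z : EuclideanSpace ℝ (Fin d) =>
      if ⟪g, proj xt⟫ ≤ ⟪g, xt⟫ then ⟪g, z⟫
      else ⟪g, z⟫ + ⟪g, proj xt - xt⟫ * ‖z - proj z‖ / ‖proj xt - xt‖) ∧
    ∀ gt : EuclideanSpace ℝ (Fin d),
      (∀ z : EuclideanSpace ℝ (Fin d),
        (if ⟪g, proj xt⟫ ≤ ⟪g, xt⟫ then ⟪g, xt⟫
          else ⟪g, xt⟫ + ⟪g, proj xt - xt⟫ * ‖xt - proj xt‖ / ‖proj xt - xt‖)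
          + ⟪gt, z - xt⟫
        ≤ (if ⟪g, proj xt⟫ ≤ ⟪g, xt⟫ then ⟪g, z⟫
            else ⟪g, z⟫ + ⟪g, proj xt - xt⟫ * ‖z - proj z‖ / ‖proj xt - xt‖)) →
      ‖gt‖ ≤ ‖g‖ ∧ ∀ u ∈ V, ⟪g, proj xt - u⟫ ≤ ⟪gt, xt - u⟫ := by
  have hprojV : ∀ z, proj z ∈ V := fun z => (hproj z).1
  have hdle : ∀ z v, v ∈ V → ‖z - proj z‖ ≤ ‖z - v‖ := fun z v hv => by
    simpa [dist_eq_norm] using (hproj z).2 v hv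
  by_cases hcase : ⟪g, proj xt⟫ ≤ ⟪g, xt⟫
  · refine ⟨?_, ?_⟩
    · simp only [if_pos hcase]
      refine ⟨convex_univ, fun a _ b _ p q hp hq hpq => ?_⟩
      show ⟪g, p • a + q • b⟫ ≤ p • ⟪g, a⟫ + q • ⟪g, b⟫
      rw [smul_eq_mul, smul_eq_mul, inner_add_right, real_inner_smul_right,
        real_inner_smul_right]
    · intro gt hgt
      simp only [if_pos hcase] at hgt
      have hgeq : gt = g := by
        have h1 := hgt (xt + (gt - g))
        have e1 : ⟪g, xt + (gt - g)⟫ = ⟪g, xt⟫ + ⟪g, gt - g⟫ := inner_add_right g xt (gt - g)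
        have e2 : xt + (gt - g) - xt = gt - g := by abel
        rw [e2, e1] at h1
        have h2 : ⟪gt - g, gt - g⟫ ≤ 0 := by
          rw [inner_sub_left]; linarith
        have := real_inner_self_nonpos.mp h2
        exact sub_eq_zero.mp this
      subst hgeq
      refine ⟨le_refl _, fun u hu => ?_⟩
      rw [inner_sub_right, inner_sub_right]
      linarith
  · -- case 2
    set x := proj xt with hxdef
    have hxV : x ∈ V := hprojV xt
    have hlt : ⟪g, xt⟫ < ⟪g, x⟫ := lt_of_not_ge hcase
    have hc : 0 < ⟪g, x - xt⟫ := by rw [inner_sub_right]; linarith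
    have hxne : x - xt ≠ 0 := by
      intro h
      have : x = xt := sub_eq_zero.mp h
      rw [this] at hlt; exact lt_irrefl _ hlt
    set c : ℝ := ⟪g, x - xt⟫ with hcdef
    set r : ℝ := ‖x - xt‖ with hrdef
    have hr : 0 < r := norm_pos_iff.mpr hxne
    have hcr : 0 < c / r := div_pos hc hr
    refine ⟨?_, ?_⟩
    · simp only [if_neg hcase]
      refine ⟨convex_univ, fun a _ b _ p q hp hq hpq => ?_⟩
      have hin : ⟪g, p • a + q • b⟫ = p * ⟪g, a⟫ + q * ⟪g, b⟫ := by
        rw [inner_add_right, real_inner_smul_right, real_inner_smul_right]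
      have hmem : p • proj a + q • proj b ∈ V := hconv (hprojV a) (hprojV b) hp hq hpq
      have hd : ‖(p • a + q • b) - proj (p • a + q • b)‖
          ≤ p * ‖a - proj a‖ + q * ‖b - proj b‖ := by
        calc ‖(p • a + q • b) - proj (p • a + q • b)‖
            ≤ ‖(p • a + q • b) - (p • proj a + q • proj b)‖ := hdle _ _ hmem
          _ = ‖p • (a - proj a) + q • (b - proj b)‖ := by
              congr 1; rw [smul_sub, smul_sub]; abel
          _ ≤ ‖p • (a - proj a)‖ + ‖q • (b - proj b)‖ := norm_add_le _ _
          _ = p * ‖a - proj a‖ + q * ‖b - proj b‖ := by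
              rw [norm_smul, norm_smul, Real.norm_of_nonneg hp, Real.norm_of_nonneg hq]
      have key : c * ‖(p • a + q • b) - proj (p • a + q • b)‖ / r
          ≤ p * (c * ‖a - proj a‖ / r) + q * (c * ‖b - proj b‖ / r) := by
        rw [show p * (c * ‖a - proj a‖ / r) + q * (c * ‖b - proj b‖ / r)
            = c * (p * ‖a - proj a‖ + q * ‖b - proj b‖) / r by ring]
        gcongr
      simp only [smul_eq_mul]
      rw [show p * (⟪g, a⟫ + c * ‖a - proj a‖ / r) + q * (⟪g, b⟫ + c * ‖b - proj b‖ / r)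
          = (p * ⟪g, a⟫ + q * ⟪g, b⟫)
            + (p * (c * ‖a - proj a‖ / r) + q * (c * ‖b - proj b‖ / r)) from by ring, hin]
      linarith [key]
    · intro gt hgt
      simp only [if_neg hcase] at hgt
      have hnorm : ‖xt - x‖ = r := by rw [hrdef, norm_sub_rev]
      have hgt' : ∀ z, ⟪g, xt⟫ + c + ⟪gt, z - xt⟫ ≤ ⟪g, z⟫ + c * ‖z - proj z‖ / r := by
        intro z
        have h1 := hgt z
        rw [hnorm] at h1
        rw [mul_div_assoc, div_self hr.ne', mul_one] at h1
        exact h1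
      set w := gt - g with hwdef
      have hdx : ‖x - proj x‖ = 0 := le_antisymm (by simpa using hdle x x hxV) (norm_nonneg _)
      -- F1
      have hF1 : c ≤ ⟪w, xt - x⟫ := by
        have h1 := hgt' x
        rw [hdx] at h1
        simp only [mul_zero, zero_div, add_zero] at h1
        have e1 : ⟪g, x⟫ = ⟪g, xt⟫ + c := by rw [hcdef, inner_sub_right] <;> ring
        have e2 : ⟪gt, x - xt⟫ = ⟪gt, x⟫ - ⟪gt, xt⟫ := inner_sub_right _ _ _
        have e3 : ⟪w, xt - x⟫ = (⟪gt, xt⟫ - ⟪gt, x⟫) - (⟪g, xt⟫ - ⟪g, x⟫) := by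
          rw [hwdef, inner_sub_left, inner_sub_right, inner_sub_right] <;> ring
        rw [e1, e2] at h1
        rw [e3, e1]
        linarith
      -- F2
      have hF2 : ∀ v, ⟪w, v⟫ ≤ c * ‖v‖ / r := by
        intro v
        have h1 := hgt' (xt + v)
        have hdb : ‖xt + v - proj (xt + v)‖ ≤ r + ‖v‖ := by
          calc ‖xt + v - proj (xt + v)‖ ≤ ‖xt + v - x‖ := hdle _ _ hxV
            _ = ‖(xt - x) + v‖ := by congr 1; abel
            _ ≤ ‖xt - x‖ + ‖v‖ := norm_add_le _ _
            _ = r + ‖v‖ := by rw [hnorm]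
        have h2 : c * ‖xt + v - proj (xt + v)‖ / r ≤ c * (r + ‖v‖) / r := by gcongr
        have h3 : c * (r + ‖v‖) / r = c + c * ‖v‖ / r := by field_simp
        have e1 : ⟪g, xt + v⟫ = ⟪g, xt⟫ + ⟪g, v⟫ := inner_add_right _ _ _
        have e2 : xt + v - xt = v := by abel
        have e3 : ⟪w, v⟫ = ⟪gt, v⟫ - ⟪g, v⟫ := inner_sub_left _ _ _
        rw [e2, e1] at h1
        rw [e3]
        linarith
      -- F3
      have hF3 : ‖w‖ ≤ c / r := by
        rcases eq_or_ne w 0 with h | h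
        · rw [h, norm_zero]; exact hcr.le
        · have hw0 : 0 < ‖w‖ := norm_pos_iff.mpr h
          have h1 := hF2 w
          rw [real_inner_self_eq_norm_sq] at h1
          rw [le_div_iff₀ hr]
          have h2 : ‖w‖ ^ 2 * r ≤ c * ‖w‖ := by
            rw [← le_div_iff₀ hr] at *; exact h1
          nlinarith
      -- F4 : w = (c/r^2) • (xt - x)
      have hF4 : w = (c / r ^ 2) • (xt - x) := by
        have hns : ‖(c / r ^ 2) • (xt - x)‖ = c / r := by
          rw [norm_smul, Real.norm_of_nonneg (by positivity), hnorm]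
          field_simp
        have hin : ⟪w, (c / r ^ 2) • (xt - x)⟫ = (c / r ^ 2) * ⟪w, xt - x⟫ :=
          real_inner_smul_right _ _ _
        have hsq : ‖w - (c / r ^ 2) • (xt - x)‖ ^ 2 ≤ 0 := by
          rw [@norm_sub_sq_real, hin, hns]
          have h1 : ‖w‖ ^ 2 ≤ (c / r) ^ 2 := by
            have := pow_le_pow_left₀ (norm_nonneg w) hF3 2
            simpa using this
          have h2 : (c / r ^ 2) * c ≤ (c / r ^ 2) * ⟪w, xt - x⟫ :=
            mul_le_mul_of_nonneg_left hF1 (by positivity)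
          have h3 : (c / r ^ 2) * c = (c / r) ^ 2 := by field_simp
          linarith
        have : ‖w - (c / r ^ 2) • (xt - x)‖ = 0 := by
          nlinarith [norm_nonneg (w - (c / r ^ 2) • (xt - x))]
        exact sub_eq_zero.mp (norm_eq_zero.mp this)
      have hgteq : gt = g + (c / r ^ 2) • (xt - x) := by
        rw [← hF4, hwdef]; abel
      constructor
      · -- norm bound
        have hinsq : ⟪xt - x, xt - x⟫ = r ^ 2 := by
          rw [real_inner_self_eq_norm_sq, hnorm]
        have hns2 : ‖(c / r ^ 2) • (xt - x)‖ = c / r := by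
          rw [norm_smul, Real.norm_of_nonneg (by positivity), hnorm]
          field_simp
        have hgs : ⟪g, (c / r ^ 2) • (xt - x)⟫ = -(c ^ 2 / r ^ 2) := by
          have e : ⟪g, xt - x⟫ = -c := by
            rw [hcdef, inner_sub_right, inner_sub_right]; ring
          rw [real_inner_smul_right, e]; field_simp
        have h1 : ‖gt‖ ^ 2 = ‖g‖ ^ 2 + 2 * ⟪g, (c / r ^ 2) • (xt - x)⟫
            + ‖(c / r ^ 2) • (xt - x)‖ ^ 2 := by
          rw [hgteq]; exact norm_add_sq_real _ _
        rw [hgs, hns2] at h1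
        have hrr : (c / r) ^ 2 = c ^ 2 / r ^ 2 := by ring
        have h2 : ‖gt‖ ^ 2 ≤ ‖g‖ ^ 2 := by
          have hp2 : 0 ≤ c ^ 2 / r ^ 2 := by positivity
          rw [h1, hrr]; linarith
        nlinarith [norm_nonneg gt, norm_nonneg g]
      · intro u hu
        haveI : Nonempty V := hne.to_subtype
        have hbdd : BddBelow (Set.range fun v : V => ‖xt - v‖) :=
          ⟨0, by rintro y ⟨v, rfl⟩; exact norm_nonneg _⟩
        have hinf : ‖xt - x‖ = ⨅ v : V, ‖xt - v‖ :=
          le_antisymm (le_ciInf fun v => hdle xt v v.2) (ciInf_le hbdd ⟨x, hxV⟩)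
        have hvar : ⟪xt - x, u - x⟫ ≤ 0 :=
          (norm_eq_iInf_iff_real_inner_le_zero hconv hxV).mp hinf u hu
        have hxu : r ^ 2 ≤ ⟪xt - x, xt - u⟫ := by
          have e : ⟪xt - x, xt - u⟫ = ⟪xt - x, xt - x⟫ - ⟪xt - x, u - x⟫ := by
            rw [inner_sub_right, inner_sub_right, inner_sub_right]; ring
          rw [e, real_inner_self_eq_norm_sq, hnorm]
          linarith
        have e1 : ⟪gt, xt - u⟫ = ⟪g, xt - u⟫ + (c / r ^ 2) * ⟪xt - x, xt - u⟫ := by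
          rw [hgteq, inner_add_left, real_inner_smul_left]
        have e2 : ⟪g, x - u⟫ = ⟪g, xt - u⟫ + c := by
          rw [hcdef, inner_sub_right, inner_sub_right, inner_sub_right]; ring
        have h3 : (c / r ^ 2) * r ^ 2 ≤ (c / r ^ 2) * ⟪xt - x, xt - u⟫ :=
          mul_le_mul_of_nonneg_left hxu (by positivity)
        have h4 : (c / r ^ 2) * r ^ 2 = c := by field_simp
        rw [e1, e2]
        linarith
end

section
/- Let K ≥ 0, R > 0, and for 0 ≤ k ≤ K suppose z_t^{(k)}, z_{t+1}^{(k)} ∈ [0, 1] and w_t^{(k)}, w_{t+1}^{(k)} ∈ ℝ^d. Define recursively x_t^{(K+1)} = 0, and for k = K down to 0: x_t^{(k)} = (1 - z_t^{(k)})·Π_{B(0,R)}(x_t^{(k+1)}) + w_t^{(k)}, where Π_{B(0,R)} denotes projection onto the Euclidean ball of radius R (and similarly for t+1). Then ‖x_t^{(0)} - x_{t+1}^{(0)}‖ ≤ R·∑_{k=0}^{K} |z_t^{(k)} - z_{t+1}^{(k)}| + ∑_{k=0}^{K} ‖w_t^{(k)} - w_{t+1}^{(k)}‖. -/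
/-!
Write `P` for the projection onto `B(0, R)`, `d_k = ‖x_t^{(k)} - x_{t+1}^{(k)}‖`. Splitting
`x_t^{(k)} - x_{t+1}^{(k)} = (1 - z_t)(P x_t^{(k+1)} - P x_{t+1}^{(k+1)})
  + (z_{t+1} - z_t) P x_{t+1}^{(k+1)} + (w_t - w_{t+1})`
and using `0 ≤ 1 - z_t ≤ 1`, `‖P ·‖ ≤ R` and that `P` is 1-Lipschitz gives
`d_k ≤ d_{k+1} + R |z_t - z_{t+1}| + ‖w_t - w_{t+1}‖`, which telescopes from `d_{K+1} = 0`.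
-/

open Finset

theorem le_sum_Ico_of_le_add {d e : ℕ → ℝ} {N : ℕ} (hN : d N ≤ 0)
    (h : ∀ k < N, d k ≤ d (k + 1) + e k) {k : ℕ} (hk : k ≤ N) :
    d k ≤ ∑ j ∈ Ico k N, e j := by
  induction hk using Nat.decreasingInduction with
  | self => simpa using hN
  | of_succ k hk ih =>
    rw [sum_eq_sum_Ico_succ_bot hk]
    linarith [h k hk]

section NormedSpace

variable {E : Type*} [NormedAddCommGroup E] [NormedSpace ℝ E]

/-- Radial retraction onto the closed ball `B(0, R)`; in an inner product space it is the metric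
projection `Π_{B(0,R)}`. -/
noncomputable def ballRetraction (R : ℝ) (x : E) : E :=
  if ‖x‖ ≤ R then x else (R / ‖x‖) • x

theorem ballRetraction_eq_smul (R : ℝ) (x : E) :
    ballRetraction R x = (min ‖x‖ R / ‖x‖) • x := by
  unfold ballRetraction
  split_ifs with h
  · rcases (norm_nonneg x).eq_or_lt with hx | hx
    · rw [← hx, div_zero, zero_smul, ← norm_eq_zero, ← hx]
    · rw [min_eq_left h, div_self hx.ne', one_smul]
  · rw [min_eq_right (not_le.1 h).le]

theorem norm_ballRetraction {R : ℝ} (hR : 0 ≤ R) (x : E) :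
    ‖ballRetraction R x‖ = min ‖x‖ R := by
  rw [ballRetraction_eq_smul, norm_smul, Real.norm_of_nonneg (by positivity)]
  rcases (norm_nonneg x).eq_or_lt with hx | hx
  · rw [← hx, mul_zero, min_eq_left hR]
  · exact div_mul_cancel₀ _ hx.ne'

theorem norm_ballRetraction_le {R : ℝ} (hR : 0 ≤ R) (x : E) :
    ‖ballRetraction R x‖ ≤ R :=
  (norm_ballRetraction hR x).trans_le (min_le_right _ _)

end NormedSpace

section InnerProductSpace

variable {E : Type*} [NormedAddCommGroup E] [InnerProductSpace ℝ E]

open RealInnerProductSpace in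
theorem norm_smul_sub_smul_le_norm_sub (x y : E) {s t : ℝ} (hs : 0 ≤ s) (ht : 0 ≤ t)
    (hst : s * t ≤ 1) (h : |‖s • x‖ - ‖t • y‖| ≤ |‖x‖ - ‖y‖|) : ‖s • x - t • y‖ ≤ ‖x - y‖ := by
  rw [norm_smul, norm_smul, Real.norm_of_nonneg hs, Real.norm_of_nonneg ht] at h
  refine (pow_le_pow_iff_left₀ (norm_nonneg _) (norm_nonneg _) two_ne_zero).1 ?_
  rw [norm_sub_sq_real, norm_sub_sq_real, real_inner_smul_left, real_inner_smul_right, norm_smul,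
    norm_smul, Real.norm_of_nonneg hs, Real.norm_of_nonneg ht]
  -- `‖x - y‖² - ‖s x - t y‖² = (‖x‖ - ‖y‖)² - (s‖x‖ - t‖y‖)² + 2 (1 - s t) (‖x‖‖y‖ - ⟪x, y⟫)`
  nlinarith [sq_le_sq.2 h, mul_nonneg (sub_nonneg.2 hst) (sub_nonneg.2 (real_inner_le_norm x y))]

theorem norm_ballRetraction_sub_ballRetraction_le {R : ℝ} (hR : 0 ≤ R) (x y : E) :
    ‖ballRetraction R x - ballRetraction R y‖ ≤ ‖x - y‖ := by
  have scale_mem (v : E) : 0 ≤ min ‖v‖ R / ‖v‖ ∧ min ‖v‖ R / ‖v‖ ≤ 1 :=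
    ⟨by positivity, div_le_one_of_le₀ (min_le_left _ _) (norm_nonneg _)⟩
  have hdist : |‖ballRetraction R x‖ - ‖ballRetraction R y‖| ≤ |‖x‖ - ‖y‖| := by
    simpa [norm_ballRetraction hR] using abs_min_sub_min_le_max ‖x‖ R ‖y‖ R
  rw [ballRetraction_eq_smul, ballRetraction_eq_smul] at hdist ⊢
  exact norm_smul_sub_smul_le_norm_sub x y (scale_mem x).1 (scale_mem y).1
    (mul_le_one₀ (scale_mem x).2 (scale_mem y).1 (scale_mem y).2) hdist

theorem norm_sub_le_of_ballRetraction_step {R a b : ℝ} (hR : 0 ≤ R)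
    (ha : a ∈ Set.Icc (0 : ℝ) 1) (u v p q : E) :
    ‖((1 - a) • ballRetraction R u + p) - ((1 - b) • ballRetraction R v + q)‖
      ≤ ‖u - v‖ + (R * |a - b| + ‖p - q‖) := by
  have hdecomp : ((1 - a) • ballRetraction R u + p) - ((1 - b) • ballRetraction R v + q)
      = (1 - a) • (ballRetraction R u - ballRetraction R v) + (b - a) • ballRetraction R v
        + (p - q) := by
    module
  have hcontract : ‖(1 - a) • (ballRetraction R u - ballRetraction R v)‖ ≤ ‖u - v‖ := by
    rw [norm_smul, Real.norm_of_nonneg (by linarith [ha.2])]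
    exact (mul_le_of_le_one_left (norm_nonneg _) (by linarith [ha.1])).trans
      (norm_ballRetraction_sub_ballRetraction_le hR u v)
  have hshift : ‖(b - a) • ballRetraction R v‖ ≤ R * |a - b| := by
    rw [norm_smul, Real.norm_eq_abs, abs_sub_comm, mul_comm]
    exact mul_le_mul_of_nonneg_right (norm_ballRetraction_le hR v) (abs_nonneg _)
  rw [hdecomp]
  linarith [norm_add₃_le (a := (1 - a) • (ballRetraction R u - ballRetraction R v))
    (b := (b - a) • ballRetraction R v) (c := p - q)]

end InnerProductSpace

theorem stmt15_general {E : Type*} [NormedAddCommGroup E] [InnerProductSpace ℝ E]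
    (K : ℕ) (R : ℝ) (hR : 0 < R)
    (z z' : ℕ → ℝ) (w w' : ℕ → E) (xa xb : ℕ → E)
    (hz : ∀ k ≤ K, z k ∈ Set.Icc (0 : ℝ) 1)
    (hxa0 : xa (K + 1) = 0) (hxb0 : xb (K + 1) = 0)
    (hxa : ∀ k ≤ K, xa k = (1 - z k) •
        (if ‖xa (k + 1)‖ ≤ R then xa (k + 1) else (R / ‖xa (k + 1)‖) • xa (k + 1)) + w k)
    (hxb : ∀ k ≤ K, xb k = (1 - z' k) •
        (if ‖xb (k + 1)‖ ≤ R then xb (k + 1) else (R / ‖xb (k + 1)‖) • xb (k + 1)) + w' k) :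
    ‖xa 0 - xb 0‖ ≤ R * ∑ k ∈ Finset.range (K + 1), |z k - z' k|
      + ∑ k ∈ Finset.range (K + 1), ‖w k - w' k‖ := by
  have hstep (k : ℕ) (hk : k < K + 1) : ‖xa k - xb k‖
      ≤ ‖xa (k + 1) - xb (k + 1)‖ + (R * |z k - z' k| + ‖w k - w' k‖) := by
    rw [hxa k (by omega), hxb k (by omega)]
    exact norm_sub_le_of_ballRetraction_step hR.le (hz k (by omega)) _ _ _ _
  rw [mul_sum, ← sum_add_distrib, range_eq_Ico]
  exact le_sum_Ico_of_le_add (by simp [hxa0, hxb0]) hstep (Nat.zero_le _)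

/-- One-step movement bound for the recursive meta-combination
`x^{(k)} = (1 - z^{(k)})·Π_{B(0,R)}(x^{(k+1)}) + w^{(k)}` (with `x^{(K+1)} = 0`):
`‖x_t^{(0)} - x_{t+1}^{(0)}‖ ≤ R ∑_k |z_t^{(k)} - z_{t+1}^{(k)}| + ∑_k ‖w_t^{(k)} - w_{t+1}^{(k)}‖`. -/
theorem stmt15 {E : Type*} [NormedAddCommGroup E] [InnerProductSpace ℝ E]
    (K : ℕ) (R : ℝ) (hR : 0 < R)
    (z z' : ℕ → ℝ) (w w' : ℕ → E) (xa xb : ℕ → E)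
    (hz : ∀ k ≤ K, z k ∈ Set.Icc (0 : ℝ) 1) (hz' : ∀ k ≤ K, z' k ∈ Set.Icc (0 : ℝ) 1)
    (hxa0 : xa (K + 1) = 0) (hxb0 : xb (K + 1) = 0)
    (hxa : ∀ k ≤ K, xa k = (1 - z k) •
        (if ‖xa (k + 1)‖ ≤ R then xa (k + 1) else (R / ‖xa (k + 1)‖) • xa (k + 1)) + w k)
    (hxb : ∀ k ≤ K, xb k = (1 - z' k) •
        (if ‖xb (k + 1)‖ ≤ R then xb (k + 1) else (R / ‖xb (k + 1)‖) • xb (k + 1)) + w' k) :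
    ‖xa 0 - xb 0‖ ≤ R * ∑ k ∈ Finset.range (K + 1), |z k - z' k|
      + ∑ k ∈ Finset.range (K + 1), ‖w k - w' k‖ :=
  stmt15_general K R hR z z' w w' xa xb hz hxa0 hxb0 hxa hxb
end

section
/- Let λ > 0, G > 0, and let g_1, …, g_T ∈ ℝ^d with ‖g_t‖ ≤ G for all t. Partition the rounds greedily into blocks: accumulate Z = ∑ g_t within a block, closing the block as soon as ‖Z‖ > max{λ, G}. Then the total number of blocks intersecting any interval [a, b] is at most 2 + (∑_{t=a}^{b} ‖g_t‖)/max{λ, G}, and each closed block's accumulated vector Z satisfies ‖Z‖ ≤ max{λ, G} + G. -/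
/-!
Blocks lying inside `[a, b]` are disjoint and each carries more than `max λ G` of
`∑_{t=a}^{b} ‖g_t‖`; any other block meeting `[a, b]` contains `a` or `b`, so by disjointness
there are at most two of those. A closed block was within the threshold before its last
vector, of norm at most `G`, was added.
-/

open Finset Function

namespace GreedyBlocks

variable {E : Type*} [NormedAddCommGroup E] {s : ℕ → ℕ}

theorem pairwise_disjoint_Ico_succ (hs : Monotone s) :
    Pairwise (Disjoint on fun j => Ico (s j) (s (j + 1))) := by
  intro i j hij
  have := hs.pairwise_disjoint_on_Ico_succ hij
  simpa only [onFun, Order.succ_eq_add_one, ← coe_Ico, disjoint_coe] using this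

theorem card_filter_mem_Ico_le_one (hs : Monotone s) (J : Finset ℕ) (x : ℕ) :
    #(J.filter fun j => x ∈ Ico (s j) (s (j + 1))) ≤ 1 := by
  refine card_le_one.mpr fun i hi j hj => ?_
  by_contra hij
  exact disjoint_left.mp (pairwise_disjoint_Ico_succ hs hij) (mem_filter.mp hi).2
    (mem_filter.mp hj).2

theorem card_filter_meets_le_two_add (hs : Monotone s) (J : Finset ℕ) (a b : ℕ) :
    #(J.filter fun j => (Ico (s j) (s (j + 1)) ∩ Icc a b).Nonempty) ≤
      2 + #(J.filter fun j => Ico (s j) (s (j + 1)) ⊆ Icc a b) := by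
  have hcover : (J.filter fun j => (Ico (s j) (s (j + 1)) ∩ Icc a b).Nonempty) ⊆
      ((J.filter fun j => a ∈ Ico (s j) (s (j + 1))) ∪
        J.filter fun j => b ∈ Ico (s j) (s (j + 1))) ∪
      J.filter fun j => Ico (s j) (s (j + 1)) ⊆ Icc a b := by
    intro j hj
    obtain ⟨hjJ, t, ht⟩ := mem_filter.mp hj
    simp only [mem_union, mem_filter, hjJ, true_and, mem_Ico]
    by_cases hsub : Ico (s j) (s (j + 1)) ⊆ Icc a b
    · exact Or.inr hsub
    obtain ⟨u, hu, hub⟩ := not_subset.mp hsub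
    simp only [mem_inter, mem_Ico, mem_Icc] at ht hu hub
    omega
  calc _ ≤ _ := card_le_card hcover
    _ ≤ _ := card_union_le _ _
    _ ≤ #(J.filter fun j => a ∈ Ico (s j) (s (j + 1))) +
          #(J.filter fun j => b ∈ Ico (s j) (s (j + 1))) +
          #(J.filter fun j => Ico (s j) (s (j + 1)) ⊆ Icc a b) := by
        gcongr; exact card_union_le _ _
    _ ≤ _ := by
        have := card_filter_mem_Ico_le_one hs J a
        have := card_filter_mem_Ico_le_one hs J b
        omega

theorem card_mul_le_sum_of_pairwiseDisjoint {ι α : Type*} [DecidableEq α] {C : Finset ι}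
    {B : ι → Finset α} {U : Finset α} {f : α → ℝ} {M : ℝ}
    (hdisj : (C : Set ι).PairwiseDisjoint B) (hsub : ∀ j ∈ C, B j ⊆ U)
    (hf : ∀ t, 0 ≤ f t)
    (hM : ∀ j ∈ C, M ≤ ∑ t ∈ B j, f t) :
    #C * M ≤ ∑ t ∈ U, f t :=
  calc #C * M = #C • M := (nsmul_eq_mul _ _).symm
    _ ≤ ∑ j ∈ C, ∑ t ∈ B j, f t := card_nsmul_le_sum _ _ _ hM
    _ = ∑ t ∈ C.biUnion B, f t := (sum_biUnion hdisj).symm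
    _ ≤ ∑ t ∈ U, f t :=
        sum_le_sum_of_subset_of_nonneg (biUnion_subset.mpr hsub) fun t _ _ => hf t

theorem norm_sum_Ico_le_add {g : ℕ → E} {m n : ℕ} {M G : ℝ} (hmn : m < n) (hM : 0 ≤ M)
    (hg : ∀ t, ‖g t‖ ≤ G)
    (hpre : ∀ r, m ≤ r → r + 1 < n → ‖∑ t ∈ Ico m (r + 1), g t‖ ≤ M) :
    ‖∑ t ∈ Ico m n, g t‖ ≤ M + G := by
  obtain ⟨k, rfl⟩ : ∃ k, n = k + 1 := ⟨n - 1, by omega⟩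
  have hprefix : ‖∑ t ∈ Ico m k, g t‖ ≤ M := by
    rcases Nat.eq_or_lt_of_le (Nat.le_of_lt_succ hmn) with rfl | hlt
    · simpa using hM
    · obtain ⟨r, rfl⟩ : ∃ r, k = r + 1 := ⟨k - 1, by omega⟩
      exact hpre r (by omega) (by omega)
  calc ‖∑ t ∈ Ico m (k + 1), g t‖ = ‖∑ t ∈ Ico m k, g t + g k‖ := by
        rw [sum_Ico_succ_top (by omega)]
    _ ≤ ‖∑ t ∈ Ico m k, g t‖ + ‖g k‖ := norm_add_le _ _
    _ ≤ M + G := add_le_add hprefix (hg k)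

end GreedyBlocks

open GreedyBlocks

theorem stmt16_general {E : Type*} [NormedAddCommGroup E]
    (lam G : ℝ) (hlam : 0 < lam)
    (g : ℕ → E) (hg : ∀ t, ‖g t‖ ≤ G)
    (s : ℕ → ℕ) (hmono : StrictMono s)
    (N : ℕ)
    (hclose : ∀ j < N, max lam G < ‖∑ t ∈ Finset.Ico (s j) (s (j + 1)), g t‖)
    (hpre : ∀ j < N, ∀ r : ℕ, s j ≤ r → r + 1 < s (j + 1) →
      ‖∑ t ∈ Finset.Ico (s j) (r + 1), g t‖ ≤ max lam G) :
    (∀ a b : ℕ,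
      (((Finset.range N).filter
          (fun j => ((Finset.Ico (s j) (s (j + 1))) ∩ Finset.Icc a b).Nonempty)).card : ℝ)
        ≤ 2 + (∑ t ∈ Finset.Icc a b, ‖g t‖) / max lam G) ∧
    (∀ j < N, ‖∑ t ∈ Finset.Ico (s j) (s (j + 1)), g t‖ ≤ max lam G + G) := by
  have hM : 0 < max lam G := lt_max_of_lt_left hlam
  refine ⟨fun a b => ?_, fun j hj =>
    norm_sum_Ico_le_add (hmono j.lt_succ_self) hM.le hg (hpre j hj)⟩
  set C := (Finset.range N).filter fun j => Ico (s j) (s (j + 1)) ⊆ Icc a b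
  have hcount := card_filter_meets_le_two_add hmono.monotone (Finset.range N) a b
  have hinside : #C * max lam G ≤ ∑ t ∈ Icc a b, ‖g t‖ := by
    refine card_mul_le_sum_of_pairwiseDisjoint
      ((pairwise_disjoint_Ico_succ hmono.monotone).set_pairwise _)
      (fun j hj => (mem_filter.mp hj).2) (fun t => norm_nonneg _) fun j hj => ?_
    exact (hclose j (mem_range.mp (mem_filter.mp hj).1)).le.trans (norm_sum_le _ _)
  calc _ ≤ (2 + #C : ℝ) := by exact_mod_cast hcount
    _ ≤ _ := by grw [← (le_div_iff₀ hM).mpr hinside]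

/-- Greedy gradient-accumulation blocks with threshold `max{λ, G}`: at most
`2 + (∑_{t=a}^b ‖g_t‖)/max{λ,G}` blocks intersect any interval `[a,b]`, and each closed
block's accumulated gradient has norm at most `max{λ,G} + G`. -/
theorem stmt16 {E : Type*} [NormedAddCommGroup E]
    (lam G : ℝ) (hlam : 0 < lam) (hG : 0 < G)
    (g : ℕ → E) (hg : ∀ t, ‖g t‖ ≤ G)
    (s : ℕ → ℕ) (hs0 : s 0 = 1) (hmono : StrictMono s)
    (N : ℕ)
    (hclose : ∀ j < N, max lam G < ‖∑ t ∈ Finset.Ico (s j) (s (j + 1)), g t‖)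
    (hpre : ∀ j < N, ∀ r : ℕ, s j ≤ r → r + 1 < s (j + 1) →
      ‖∑ t ∈ Finset.Ico (s j) (r + 1), g t‖ ≤ max lam G) :
    (∀ a b : ℕ,
      (((Finset.range N).filter
          (fun j => ((Finset.Ico (s j) (s (j + 1))) ∩ Finset.Icc a b).Nonempty)).card : ℝ)
        ≤ 2 + (∑ t ∈ Finset.Icc a b, ‖g t‖) / max lam G) ∧
    (∀ j < N, ‖∑ t ∈ Finset.Ico (s j) (s (j + 1)), g t‖ ≤ max lam G + G) :=
  stmt16_general lam G hlam g hg s hmono N hclose hpre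
end

section
/- For every interval I = [a, b] of positive integers, I can be partitioned into two finite sequences of disjoint consecutive geometric-covering intervals (I_{-k}, …, I_0) and (I_1, …, I_p) (where each geometric-covering interval has the form [2^k·i, 2^k·(i+1) - 1] for some k ≥ 0, i ≥ 1), such that |I_{-i}|/|I_{-i+1}| ≤ 1/2 for all i ≥ 1 and |I_i|/|I_{i-1}| ≤ 1/2 for all i ≥ 2. In particular, the total number of intervals in each sequence is O(log |I|): k ≤ log₂|I| and p ≤ 1 + log₂|I|. -/
private def GCint (x y : ℕ) : Prop :=
  ∃ κ j : ℕ, 1 ≤ j ∧ x = 2 ^ κ * j ∧ y = 2 ^ κ * (j + 1)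

private lemma chain_le (u : ℕ → ℕ) (M : ℕ) (h : ∀ j, j < M → u j < u (j+1)) :
    ∀ j, j ≤ M → u 0 ≤ u j := by
  intro j hj
  induction j with
  | zero => exact le_refl _
  | succ n ih => exact le_trans (ih (by omega)) (le_of_lt (h n (by omega)))

/-- Decreasing phase: binary expansion of the remainder `r` starting at `s`. -/
private lemma lemR : ∀ r s e : ℕ, 0 < s → r < 2 ^ e → 2 ^ e ∣ s →
    ∃ (p : ℕ) (u : ℕ → ℕ), u 0 = s ∧ u p = s + r ∧ 2 ^ p ≤ r + 1 ∧
      (∀ j, j < p → u j < u (j+1)) ∧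
      (∀ j, j < p → GCint (u j) (u (j+1))) ∧
      (∀ j, j < p → ∃ c : ℕ, u (j+1) = u j + 2 ^ c ∧ 2 ^ c ≤ r) ∧
      (∀ j, 1 ≤ j → j < p → 2 * (u (j+1) - u j) ≤ u j - u (j-1)) := by
  intro r
  induction r using Nat.strong_induction_on with
  | _ r IH =>
    intro s e hs hre hes
    rcases Nat.eq_zero_or_pos r with hr | hr
    · subst hr
      exact ⟨0, fun _ => s, rfl, by simp, by norm_num, by omega, by omega, by omega, by omega⟩
    · set e₀ := Nat.log 2 r with he₀
      have h1 : 2 ^ e₀ ≤ r := Nat.pow_log_le_self 2 hr.ne'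
      have h2 : r < 2 ^ (e₀ + 1) := Nat.lt_pow_succ_log_self one_lt_two r
      have hp2 : 2 ^ (e₀ + 1) = 2 * 2 ^ e₀ := by ring
      have he₀e : e₀ < e := by
        by_contra h
        push_neg at h
        have : 2 ^ e ≤ 2 ^ e₀ := Nat.pow_le_pow_right (by norm_num) h
        omega
      have hdvd : 2 ^ e₀ ∣ s := dvd_trans (pow_dvd_pow 2 he₀e.le) hes
      obtain ⟨p', u', hu0, hup, hpow, hmono, hgc, hgap, hhalf⟩ :=
        IH (r - 2 ^ e₀) (by omega) (s + 2 ^ e₀) e₀ (by omega) (by omega)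
          (dvd_add hdvd dvd_rfl)
      refine ⟨p' + 1, fun j => match j with | 0 => s | (j+1) => u' j,
        rfl, ?_, ?_, ?_, ?_, ?_, ?_⟩
      · show u' p' = s + r
        omega
      · rw [pow_succ]
        omega
      · intro j hj
        cases j with
        | zero => show s < u' 0; omega
        | succ j => exact hmono j (by omega)
      · intro j hj
        cases j with
        | zero =>
          refine ⟨e₀, s / 2 ^ e₀, ?_, ?_, ?_⟩
          · have h3 : 2 ^ e ≤ s := Nat.le_of_dvd hs hes
            have h4 : 2 ^ e₀ ≤ s := le_trans (Nat.pow_le_pow_right (by norm_num) he₀e.le) h3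
            exact (Nat.one_le_div_iff (by positivity)).mpr h4
          · exact (Nat.div_mul_cancel hdvd).symm.trans (mul_comm _ _)
          · show u' 0 = 2 ^ e₀ * (s / 2 ^ e₀ + 1)
            rw [hu0, mul_add, Nat.mul_div_cancel' hdvd, mul_one]
        | succ j => exact hgc j (by omega)
      · intro j hj
        cases j with
        | zero => exact ⟨e₀, show u' 0 = s + 2 ^ e₀ from hu0, h1⟩
        | succ j =>
          obtain ⟨c, hc1, hc2⟩ := hgap j (by omega)
          exact ⟨c, hc1, by omega⟩
      · intro j hj1 hj2
        cases j with
        | zero => omega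
        | succ j =>
          cases j with
          | zero =>
            show 2 * (u' 1 - u' 0) ≤ u' 0 - s
            obtain ⟨c, hc1, hc2⟩ := hgap 0 (by omega)
            have hce : c < e₀ := by
              by_contra h
              push_neg at h
              have : 2 ^ e₀ ≤ 2 ^ c := Nat.pow_le_pow_right (by norm_num) h
              omega
            have h5 : 2 ^ (c+1) ≤ 2 ^ e₀ := Nat.pow_le_pow_right (by norm_num) (by omega)
            have hcc : 2 ^ (c+1) = 2 * 2 ^ c := by ring
            rw [hc1, hu0]
            omega
          | succ j =>
            have := hhalf (j+1) (by omega) (by omega)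
            simpa using this

/-- Increasing phase: repeatedly take `2 ^ ν₂(s)`-sized blocks. -/
private lemma lemL : ∀ n s : ℕ, 0 < s →
    ∃ (N : ℕ) (u : ℕ → ℕ) (r : ℕ),
      u 0 = s ∧ u N + r = s + n ∧ (∃ e, r < 2 ^ e ∧ 2 ^ e ∣ u N) ∧
      2 ^ (s.factorization 2) * (2 ^ N - 1) ≤ n ∧
      (0 < N → u 1 = s + 2 ^ (s.factorization 2)) ∧
      (∀ j, j < N → u j < u (j+1)) ∧
      (∀ j, j < N → GCint (u j) (u (j+1))) ∧
      (∀ j, j + 2 ≤ N → 2 * (u (j+1) - u j) ≤ u (j+2) - u (j+1)) := by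
  intro n
  induction n using Nat.strong_induction_on with
  | _ n IH =>
    intro s hs
    set v := s.factorization 2 with hv
    have hvd : 2 ^ v ∣ s := Nat.ordProj_dvd s 2
    rcases lt_or_ge n (2 ^ v) with hn | hn
    · exact ⟨0, fun _ => s, n, rfl, rfl, ⟨v, hn, hvd⟩, by simp, by omega, by omega, by omega,
        by omega⟩
    · have hq : ¬ 2 ∣ (s / 2 ^ v) := Nat.not_dvd_ordCompl Nat.prime_two hs.ne'
      have hmul : 2 ^ v * (s / 2 ^ v) = s := Nat.mul_div_cancel' hvd
      have hs' : 2 ^ (v + 1) ∣ s + 2 ^ v := by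
        have h0 : s + 2 ^ v = 2 ^ v * (s / 2 ^ v + 1) := by rw [mul_add, hmul, mul_one]
        rw [h0, pow_succ]
        have h2 : 2 ∣ s / 2 ^ v + 1 := by omega
        obtain ⟨w, hw⟩ := h2
        exact ⟨w, by rw [hw]; ring⟩
      have hpos : 0 < 2 ^ v := by positivity
      obtain ⟨N', u', r, hu0, huN, hre, hbound, hfirst, hmono, hgc, hdbl⟩ :=
        IH (n - 2 ^ v) (by omega) (s + 2 ^ v) (by omega)
      have hv' : v + 1 ≤ (s + 2 ^ v).factorization 2 :=
        (Nat.Prime.pow_dvd_iff_le_factorization Nat.prime_two (by omega)).mp hs'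
      have hmono2 : 2 ^ (v+1) ≤ 2 ^ ((s + 2^v).factorization 2) :=
        Nat.pow_le_pow_right (by norm_num) hv'
      refine ⟨N' + 1, fun j => match j with | 0 => s | (j+1) => u' j, r,
        rfl, ?_, ?_, ?_, ?_, ?_, ?_, ?_⟩
      · show u' N' + r = s + n
        omega
      · obtain ⟨e, he1, he2⟩ := hre
        exact ⟨e, he1, he2⟩
      · have hb' : 2 ^ ((s + 2^v).factorization 2) * (2 ^ N' - 1) ≤ n - 2 ^ v := hbound
        have h1 : 2 ^ (v+1) * (2 ^ N' - 1) ≤ n - 2 ^ v :=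
          le_trans (Nat.mul_le_mul_right _ hmono2) hb'
        have hN1 : 1 ≤ 2 ^ N' := Nat.one_le_two_pow
        have e1 : 2 ^ (N' + 1) - 1 = 2 * (2 ^ N' - 1) + 1 := by
          rw [pow_succ]
          omega
        rw [e1]
        have e2 : 2 ^ v * (2 * (2 ^ N' - 1) + 1) = 2 ^ (v+1) * (2 ^ N' - 1) + 2 ^ v := by
          rw [pow_succ]
          ring
        rw [e2]
        omega
      · intro _
        show u' 0 = s + 2 ^ v
        exact hu0
      · intro j hj
        cases j with
        | zero => show s < u' 0; omega
        | succ j => exact hmono j (by omega)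
      · intro j hj
        cases j with
        | zero =>
          refine ⟨v, s / 2 ^ v, ?_, ?_, ?_⟩
          · have h3 : 2 ^ v ≤ s := Nat.le_of_dvd hs hvd
            exact (Nat.one_le_div_iff hpos).mpr h3
          · exact hmul.symm
          · show u' 0 = 2 ^ v * (s / 2 ^ v + 1)
            rw [hu0, mul_add, hmul, mul_one]
        | succ j => exact hgc j (by omega)
      · intro j hj
        cases j with
        | zero =>
          show 2 * (u' 0 - s) ≤ u' 1 - u' 0
          have h1 : u' 1 = (s + 2 ^ v) + 2 ^ ((s + 2^v).factorization 2) := hfirst (by omega)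
          have hpp : 2 ^ (v+1) = 2 * 2 ^ v := by ring
          rw [hu0, h1]
          omega
        | succ j =>
          have := hdbl j (by omega)
          simpa using this
private lemma glue (a m : ℕ) (k p : ℕ) (uL uR : ℕ → ℕ)
    (hL0 : uL 0 = a) (hmid : uL (k+1) = uR 0) (hRp : uR p = m)
    (hLmono : ∀ j, j < k+1 → uL j < uL (j+1))
    (hRmono : ∀ j, j < p → uR j < uR (j+1))
    (hLgc : ∀ j, j < k+1 → GCint (uL j) (uL (j+1)))
    (hRgc : ∀ j, j < p → GCint (uR j) (uR (j+1)))
    (hLdbl : ∀ j, j + 2 ≤ k+1 → 2 * (uL (j+1) - uL j) ≤ uL (j+2) - uL (j+1))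
    (hRhalf : ∀ j, 1 ≤ j → j < p → 2 * (uR (j+1) - uR j) ≤ uR j - uR (j-1)) :
    ∃ t : ℤ → ℕ,
      t (-(k : ℤ)) = a ∧ t ((p : ℤ) + 1) = m ∧
      (∀ i : ℤ, -(k : ℤ) ≤ i → i ≤ (p : ℤ) → t i < t (i + 1)) ∧
      (∀ i : ℤ, -(k : ℤ) ≤ i → i ≤ (p : ℤ) →
        ∃ κ j : ℕ, 1 ≤ j ∧ t i = 2 ^ κ * j ∧ t (i + 1) = 2 ^ κ * (j + 1)) ∧
      (∀ i : ℤ, -(k : ℤ) ≤ i → i ≤ -1 → 2 * (t (i + 1) - t i) ≤ t (i + 2) - t (i + 1)) ∧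
      (∀ i : ℤ, 2 ≤ i → i ≤ (p : ℤ) → 2 * (t (i + 1) - t i) ≤ t i - t (i - 1)) := by
  set t : ℤ → ℕ := fun i => if i ≤ 0 then uL (i + k).toNat else uR (i - 1).toNat with ht
  have htL : ∀ i : ℤ, i ≤ 1 → t i = uL (i + k).toNat := by
    intro i hi
    rcases le_or_gt i 0 with h | h
    · simp [ht, h]
    · have h1 : i = 1 := by omega
      subst h1
      have : ¬ (1:ℤ) ≤ 0 := by omega
      simp only [ht, if_neg this]
      have e1 : ((1:ℤ) - 1).toNat = 0 := by omega
      have e2 : ((1:ℤ) + k).toNat = k + 1 := by omega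
      rw [e1, e2, hmid]
  have htR : ∀ i : ℤ, 1 ≤ i → t i = uR (i - 1).toNat := by
    intro i hi
    rcases eq_or_lt_of_le hi with h | h
    · rw [← h, htL 1 le_rfl]
      have e1 : ((1:ℤ) - 1).toNat = 0 := by omega
      have e2 : ((1:ℤ) + k).toNat = k + 1 := by omega
      rw [e1, e2, hmid]
    · have hne : ¬ i ≤ 0 := by omega
      simp only [ht, if_neg hne]
  refine ⟨t, ?_, ?_, ?_, ?_, ?_, ?_⟩
  · rw [htL _ (by omega)]
    have : (-(k:ℤ) + k).toNat = 0 := by omega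
    rw [this, hL0]
  · rw [htR _ (by omega)]
    have : ((p:ℤ) + 1 - 1).toNat = p := by omega
    rw [this, hRp]
  · intro i h1 h2
    rcases le_or_gt i 0 with h | h
    · rw [htL i (by omega), htL (i+1) (by omega)]
      have e1 : (i + 1 + k).toNat = (i + k).toNat + 1 := by omega
      rw [e1]
      exact hLmono _ (by omega)
    · rw [htR i (by omega), htR (i+1) (by omega)]
      have e1 : (i + 1 - 1).toNat = (i - 1).toNat + 1 := by omega
      rw [e1]
      exact hRmono _ (by omega)
  · intro i h1 h2
    rcases le_or_gt i 0 with h | h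
    · rw [htL i (by omega), htL (i+1) (by omega)]
      have e1 : (i + 1 + k).toNat = (i + k).toNat + 1 := by omega
      rw [e1]
      exact hLgc _ (by omega)
    · rw [htR i (by omega), htR (i+1) (by omega)]
      have e1 : (i + 1 - 1).toNat = (i - 1).toNat + 1 := by omega
      rw [e1]
      exact hRgc _ (by omega)
  · intro i h1 h2
    rw [htL i (by omega), htL (i+1) (by omega), htL (i+2) (by omega)]
    have e1 : (i + 1 + k).toNat = (i + k).toNat + 1 := by omega
    have e2 : (i + 2 + k).toNat = (i + k).toNat + 2 := by omega
    rw [e1, e2]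
    exact hLdbl _ (by omega)
  · intro i h1 h2
    rw [htR i (by omega), htR (i+1) (by omega), htR (i-1) (by omega)]
    have e1 : (i + 1 - 1).toNat = (i - 1).toNat + 1 := by omega
    have e2 : (i - 1 - 1).toNat = (i - 1).toNat - 1 := by omega
    rw [e1, e2]
    exact hRhalf _ (by omega) (by omega)

private lemma nat_le_logb (k n : ℕ) (h : 2 ^ k ≤ n) : (k : ℝ) ≤ Real.logb 2 n := by
  have h1 : ((2:ℝ) ^ k) ≤ (n : ℝ) := by exact_mod_cast h
  have h2 : Real.logb 2 ((2:ℝ) ^ k) ≤ Real.logb 2 (n : ℝ) :=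
    Real.logb_le_logb_of_le (by norm_num) (by positivity) h1
  calc (k : ℝ) = Real.logb 2 ((2:ℝ) ^ k) := by
        rw [Real.logb_pow]; simp [Real.logb_self_eq_one (by norm_num : (1:ℝ) < 2)]
    _ ≤ _ := h2

private lemma nat_le_logb' (p n : ℕ) (hn : 1 ≤ n) (h : 2 ^ p ≤ 2 * n) :
    (p : ℝ) ≤ 1 + Real.logb 2 n := by
  have h1 : (p : ℝ) ≤ Real.logb 2 ((2 * n : ℕ) : ℝ) := nat_le_logb p (2 * n) h
  have h2 : ((2 * n : ℕ) : ℝ) = 2 * (n : ℝ) := by push_cast; ring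
  rw [h2] at h1
  rwa [Real.logb_mul (by norm_num) (by positivity), Real.logb_self_eq_one (by norm_num)] at h1

/-- Lemma 5 of Daniely et al. (2015): any interval `[a,b] ⊆ [1,∞)` decomposes into two
consecutive sequences of geometric-covering intervals `(I_{-k},…,I_0)` and `(I_1,…,I_p)`
(with breakpoints `t i`, so `I_i = [t i, t (i+1) - 1]`), where lengths at least double
towards the middle, `k ≤ log₂|I|` and `p ≤ 1 + log₂|I|`. -/
theorem stmt17 (a b : ℕ) (ha : 1 ≤ a) (hab : a ≤ b) :
    ∃ (k p : ℕ) (t : ℤ → ℕ),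
      t (-(k : ℤ)) = a ∧ t ((p : ℤ) + 1) = b + 1 ∧
      (∀ i : ℤ, -(k : ℤ) ≤ i → i ≤ (p : ℤ) → t i < t (i + 1)) ∧
      (∀ i : ℤ, -(k : ℤ) ≤ i → i ≤ (p : ℤ) →
        ∃ κ j : ℕ, 1 ≤ j ∧ t i = 2 ^ κ * j ∧ t (i + 1) = 2 ^ κ * (j + 1)) ∧
      (∀ i : ℤ, -(k : ℤ) ≤ i → i ≤ -1 → 2 * (t (i + 1) - t i) ≤ t (i + 2) - t (i + 1)) ∧
      (∀ i : ℤ, 2 ≤ i → i ≤ (p : ℤ) → 2 * (t (i + 1) - t i) ≤ t i - t (i - 1)) ∧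
      (k : ℝ) ≤ Real.logb 2 ((b : ℝ) - (a : ℝ) + 1) ∧
      (p : ℝ) ≤ 1 + Real.logb 2 ((b : ℝ) - (a : ℝ) + 1) := by
  set n := b + 1 - a with hn
  have hn1 : 1 ≤ n := by omega
  have hcast : ((n : ℕ) : ℝ) = (b : ℝ) - a + 1 := by
    rw [hn, Nat.cast_sub (by omega : a ≤ b + 1)]
    push_cast
    ring
  obtain ⟨N, uL, r, hL0, hLN, ⟨e, hre, hed⟩, hbound, hfirst, hLmono, hLgc, hLdbl⟩ :=
    lemL n a (by omega)
  have hmid_ge : a ≤ uL N := by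
    have := chain_le uL N hLmono N le_rfl
    rwa [hL0] at this
  obtain ⟨p', uR, hR0, hRp, hRpow, hRmono, hRgc, hRgap, hRhalf⟩ :=
    lemR r (uL N) e (by omega) hre hed
  have hrn : r ≤ n := by omega
  have hRend : uR p' = b + 1 := by rw [hRp]; omega
  rcases Nat.eq_zero_or_pos N with hN | hN
  · -- increasing phase empty: steal the first decreasing interval
    subst hN
    have hra : r = n := by omega
    have hp1 : 1 ≤ p' := by
      by_contra h
      push_neg at h
      have hp0 : p' = 0 := by omega
      rw [hp0, hR0] at hRp
      omega
    obtain ⟨t, h1, h2, h3, h4, h5, h6⟩ :=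
      glue a (b + 1) 0 (p' - 1) (fun j => uR (min j 1)) (fun j => uR (j + 1))
        (by simpa using hL0 ▸ hR0) (by norm_num)
        (by show uR (p' - 1 + 1) = b + 1; rw [show p' - 1 + 1 = p' by omega]; exact hRend)
        (by intro j hj
            have hj0 : j = 0 := by omega
            subst hj0
            simpa using hRmono 0 (by omega))
        (by intro j hj; exact hRmono (j + 1) (by omega))
        (by intro j hj
            have hj0 : j = 0 := by omega
            subst hj0
            simpa using hRgc 0 (by omega))
        (by intro j hj; exact hRgc (j + 1) (by omega))
        (by intro j hj; omega)
        (by intro j hj1 hj2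
            have := hRhalf (j + 1) (by omega) (by omega)
            simpa [show j - 1 + 1 = j by omega] using this)
    refine ⟨0, p' - 1, t, h1, h2, h3, h4, h5, h6, ?_, ?_⟩
    · rw [← hcast]
      push_cast
      exact Real.logb_nonneg (by norm_num) (by exact_mod_cast hn1)
    · rw [← hcast]
      have hone : 1 ≤ 2 ^ (p' - 1) := Nat.one_le_two_pow
      have hsp : 2 ^ p' = 2 * 2 ^ (p' - 1) := by
        rw [← pow_succ']
        congr 1
        omega
      exact nat_le_logb' (p' - 1) n hn1 (by omega)
  · -- main case
    obtain ⟨t, h1, h2, h3, h4, h5, h6⟩ :=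
      glue a (b + 1) (N - 1) p' uL uR hL0
        (by rw [show N - 1 + 1 = N by omega]; exact hR0.symm) hRend
        (by intro j hj; exact hLmono j (by omega)) hRmono
        (by intro j hj; exact hLgc j (by omega)) hRgc
        (by intro j hj; exact hLdbl j (by omega)) hRhalf
    refine ⟨N - 1, p', t, h1, h2, h3, h4, h5, h6, ?_, ?_⟩
    · rw [← hcast]
      have hle : 2 ^ N - 1 ≤ 2 ^ (a.factorization 2) * (2 ^ N - 1) :=
        Nat.le_mul_of_pos_left _ (by positivity)
      have hsp : 2 ^ N = 2 * 2 ^ (N - 1) := by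
        rw [← pow_succ']
        congr 1
        omega
      have hone : 1 ≤ 2 ^ (N - 1) := Nat.one_le_two_pow
      exact nat_le_logb (N - 1) n (by omega)
    · rw [← hcast]
      exact nat_le_logb' p' n hn1 (by omega)
end

section
/- Suppose an algorithm achieves regret at most c₁·log|J| + c₂ + c₃·√(∑_{t∈J} ‖g_t‖) on every geometric-covering interval J, where g_t are per-round gradient vectors. Then on any interval I of positive integers, decomposing I into the GC-interval sequences of the previous lemma and summing, the total regret on I is at most O(c₁·log²|I| + (c₂ + c₃·√(∑_{t∈I}‖g_t‖))·log|I|). -/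
/-!
Cover `I = [a, a + n - 1]` greedily by dyadic blocks `[2^k i, 2^k (i + 1) - 1]`. With
`j = ⌊log₂ n⌋` and `c` the least multiple of `2^j` above `a`, the part `[a, c - 1]` is covered by
blocks of strictly increasing sizes and the part `[c, a + n - 1]` by blocks of strictly decreasing
sizes (the binary expansion of its length), at most `j + 1` blocks each. Every block lies inside
`I`, so its bound is at most `c₁ log n + c₂ + c₃ √(∑_{t ∈ I} g_t)`, and superadditivity multiplies
this by `2 (j + 1) ≤ 3 (1 + log n)`.
-/

namespace GeometricCovering

def IntervalSuperadditive (Reg : ℕ → ℕ → ℝ) : Prop :=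
  ∀ a b c : ℕ, a ≤ b → b < c → Reg a c ≤ Reg a b + Reg (b + 1) c

def BlockBounded (Reg : ℕ → ℕ → ℝ) (X : ℝ) (lo hi : ℕ) : Prop :=
  ∀ k a : ℕ, 1 ≤ a → 2 ^ k ∣ a → lo ≤ a → a + 2 ^ k ≤ hi + 1 → Reg a (a + 2 ^ k - 1) ≤ X

variable {Reg : ℕ → ℕ → ℝ} {X : ℝ} {lo hi : ℕ}

theorem BlockBounded.le_of_aligned_start (hR : IntervalSuperadditive Reg)
    (hB : BlockBounded Reg X lo hi) (hX : 0 ≤ X) (j : ℕ) :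
    ∀ a n : ℕ, 1 ≤ a → 2 ^ j ∣ a → 1 ≤ n → n < 2 ^ (j + 1) → lo ≤ a → a + n ≤ hi + 1 →
      Reg a (a + n - 1) ≤ (j + 1) * X := by
  induction j with
  | zero =>
    intro a n ha _ hn hn' hlo hhi
    obtain rfl : n = 1 := by omega
    simpa using hB 0 a ha (one_dvd a) hlo hhi
  | succ j ih =>
    intro a n ha hdvd hn hn' hlo hhi
    have hpow : 2 ^ (j + 1 + 1) = 2 * 2 ^ (j + 1) := by ring
    have hdvd' : 2 ^ j ∣ a := (pow_dvd_pow 2 j.le_succ).trans hdvd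
    have hjX : 0 ≤ (j : ℝ) * X := by positivity
    push_cast
    rcases lt_trichotomy n (2 ^ (j + 1)) with hlt | rfl | hgt
    · linarith [ih a n ha hdvd' hn hlt hlo hhi]
    · linarith [hB (j + 1) a ha hdvd hlo hhi]
    · have hsplit := hR a (a + 2 ^ (j + 1) - 1) (a + n - 1) (by omega) (by omega)
      rw [show a + 2 ^ (j + 1) - 1 + 1 = a + 2 ^ (j + 1) by omega] at hsplit
      have hrest := ih (a + 2 ^ (j + 1)) (n - 2 ^ (j + 1)) (by omega)
        (dvd_add hdvd' (pow_dvd_pow 2 j.le_succ)) (by omega) (by omega) (by omega) (by omega)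
      rw [show a + 2 ^ (j + 1) + (n - 2 ^ (j + 1)) - 1 = a + n - 1 by omega] at hrest
      linarith [hB (j + 1) a ha hdvd hlo (by omega)]

theorem BlockBounded.le_of_aligned_end (hR : IntervalSuperadditive Reg)
    (hB : BlockBounded Reg X lo hi) (hX : 0 ≤ X) (j : ℕ) :
    ∀ a n : ℕ, 1 ≤ a → 2 ^ j ∣ a + n → 1 ≤ n → n < 2 ^ (j + 1) → lo ≤ a → a + n ≤ hi + 1 →
      Reg a (a + n - 1) ≤ (j + 1) * X := by
  induction j with
  | zero =>
    intro a n ha _ hn hn' hlo hhi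
    obtain rfl : n = 1 := by omega
    simpa using hB 0 a ha (one_dvd a) hlo hhi
  | succ j ih =>
    intro a n ha hdvd hn hn' hlo hhi
    have hpow : 2 ^ (j + 1 + 1) = 2 * 2 ^ (j + 1) := by ring
    have hdvd' : 2 ^ j ∣ a + n := (pow_dvd_pow 2 j.le_succ).trans hdvd
    have hjX : 0 ≤ (j : ℝ) * X := by positivity
    push_cast
    rcases lt_trichotomy n (2 ^ (j + 1)) with hlt | rfl | hgt
    · linarith [ih a n ha hdvd' hn hlt hlo hhi]
    · linarith [hB (j + 1) a ha ((Nat.dvd_add_left dvd_rfl).mp hdvd) hlo hhi]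
    · set m := n - 2 ^ (j + 1)
      have hdvdm : 2 ^ (j + 1) ∣ a + m :=
        (Nat.dvd_add_left dvd_rfl).mp (by rwa [show a + m + 2 ^ (j + 1) = a + n by omega])
      have hsplit := hR a (a + m - 1) (a + n - 1) (by omega) (by omega)
      rw [show a + m - 1 + 1 = a + m by omega] at hsplit
      have hfirst := ih a m ha ((pow_dvd_pow 2 j.le_succ).trans hdvdm) (by omega) (by omega)
        hlo (by omega)
      have hlast := hB (j + 1) (a + m) (by omega) hdvdm (by omega) (by omega)
      rw [show a + m + 2 ^ (j + 1) - 1 = a + n - 1 by omega] at hlast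
      linarith

theorem BlockBounded.le_two_mul_log_add_one (hR : IntervalSuperadditive Reg)
    (hB : BlockBounded Reg X lo hi) (hX : 0 ≤ X) {a n : ℕ} (ha : 1 ≤ a) (hn : 1 ≤ n)
    (hlo : lo ≤ a) (hhi : a + n ≤ hi + 1) :
    Reg a (a + n - 1) ≤ 2 * (Nat.log 2 n + 1) * X := by
  set j := Nat.log 2 n
  have hjn : 2 ^ j ≤ n := Nat.pow_log_le_self 2 (by omega)
  have hnj : n < 2 ^ (j + 1) := Nat.lt_pow_succ_log_self (by norm_num) n
  have hpos : 0 < 2 ^ j := Nat.two_pow_pos j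
  have hjX : 0 ≤ (j : ℝ) * X := by positivity
  -- `a + m` is the least multiple of `2^j` strictly above `a`
  obtain ⟨m, hm⟩ : ∃ m, m = 2 ^ j - a % 2 ^ j := ⟨_, rfl⟩
  have hmod : a % 2 ^ j < 2 ^ j := Nat.mod_lt a hpos
  have hdvd : 2 ^ j ∣ a + m := by
    refine ⟨a / 2 ^ j + 1, ?_⟩
    have := Nat.div_add_mod a (2 ^ j)
    rw [mul_add]
    omega
  have hend := hB.le_of_aligned_end hR hX j a m ha hdvd (by omega) (by omega) hlo (by omega)
  rcases eq_or_lt_of_le (show m ≤ n by omega) with rfl | hmn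
  · linarith
  · have hsplit := hR a (a + m - 1) (a + n - 1) (by omega) (by omega)
    rw [show a + m - 1 + 1 = a + m by omega] at hsplit
    have hstart := hB.le_of_aligned_start hR hX j (a + m) (n - m) (by omega) hdvd (by omega)
      (by omega) (by omega) (by omega)
    rw [show a + m + (n - m) - 1 = a + n - 1 by omega] at hstart
    linarith

end GeometricCovering

open GeometricCovering

theorem two_mul_natLog_two_add_one_le (n : ℕ) :
    2 * ((Nat.log 2 n : ℝ) + 1) ≤ 3 * (1 + Real.log n) := by
  have hlog : (Nat.log 2 n : ℝ) * Real.log 2 ≤ Real.log n := by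
    have h := Real.natLog_le_logb n 2
    rwa [Real.logb, Nat.cast_ofNat, le_div_iff₀ (Real.log_pos one_lt_two)] at h
  nlinarith [Real.log_two_gt_d9, (Nat.log 2 n).cast_nonneg (α := ℝ)]

theorem blockBounded_of_gc_bound {Reg : ℕ → ℕ → ℝ} {gn : ℕ → ℝ} {c₁ c₂ c₃ : ℝ}
    (hc₁ : 0 ≤ c₁) (hc₃ : 0 ≤ c₃) (hg : ∀ t, 0 ≤ gn t)
    (hgc : ∀ k i : ℕ, 1 ≤ i →
      Reg (2 ^ k * i) (2 ^ k * (i + 1) - 1)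
        ≤ c₁ * Real.log ((2 : ℝ) ^ k) + c₂
          + c₃ * Real.sqrt (∑ t ∈ Finset.Icc (2 ^ k * i) (2 ^ k * (i + 1) - 1), gn t))
    (a b : ℕ) :
    BlockBounded Reg (c₁ * Real.log ((b - a + 1 : ℕ) : ℝ) + c₂
      + c₃ * Real.sqrt (∑ t ∈ Finset.Icc a b, gn t)) a b := by
  intro k s hs hdvd hlo hhi
  obtain ⟨i, rfl⟩ := hdvd
  have hi : 1 ≤ i := Nat.pos_of_mul_pos_left hs
  have hend : 2 ^ k * (i + 1) - 1 = 2 ^ k * i + 2 ^ k - 1 := by rw [mul_add, mul_one]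
  rw [← hend]
  refine (hgc k i hi).trans ?_
  have hlen : ((2 ^ k : ℕ) : ℝ) ≤ ((b - a + 1 : ℕ) : ℝ) := Nat.cast_le.mpr (by omega)
  have hsub : Finset.Icc (2 ^ k * i) (2 ^ k * (i + 1) - 1) ⊆ Finset.Icc a b :=
    Finset.Icc_subset_Icc hlo (by omega)
  gcongr c₁ * ?_ + c₂ + c₃ * Real.sqrt ?_
  · exact Real.log_le_log (by positivity) (by exact_mod_cast hlen)
  · exact Finset.sum_le_sum_of_subset_of_nonneg hsub fun t _ _ => hg t

/-- From a regret bound `c₁ log|J| + c₂ + c₃ √(∑_{t∈J} g_t)` on every geometric-covering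
interval `J`, superadditivity over consecutive intervals yields, on any interval `[a,b]`,
regret `O(c₁ log²|I| + (c₂ + c₃ √(∑_{t∈I} g_t)) log|I|)` (with `1 + log` factors). -/
theorem stmt18 :
    ∃ Cabs : ℝ, 0 < Cabs ∧
      ∀ (Reg : ℕ → ℕ → ℝ) (gn : ℕ → ℝ) (c₁ c₂ c₃ : ℝ),
        0 ≤ c₁ → 0 ≤ c₂ → 0 ≤ c₃ → (∀ t, 0 ≤ gn t) →
        (∀ a b c : ℕ, a ≤ b → b < c → Reg a c ≤ Reg a b + Reg (b + 1) c) →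
        (∀ k i : ℕ, 1 ≤ i →
          Reg (2 ^ k * i) (2 ^ k * (i + 1) - 1)
            ≤ c₁ * Real.log ((2 : ℝ) ^ k) + c₂
              + c₃ * Real.sqrt (∑ t ∈ Finset.Icc (2 ^ k * i) (2 ^ k * (i + 1) - 1), gn t)) →
        ∀ a b : ℕ, 1 ≤ a → a ≤ b →
          Reg a b ≤ Cabs * (c₁ * (1 + Real.log ((b : ℝ) - (a : ℝ) + 1)) ^ 2
            + (c₂ + c₃ * Real.sqrt (∑ t ∈ Finset.Icc a b, gn t))
              * (1 + Real.log ((b : ℝ) - (a : ℝ) + 1))) := by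
  refine ⟨3, by norm_num, fun Reg gn c₁ c₂ c₃ hc₁ hc₂ hc₃ hg hsup hgc a b ha hab => ?_⟩
  set n := b - a + 1
  have hn : ((n : ℕ) : ℝ) = (b : ℝ) - (a : ℝ) + 1 := by push_cast [n, Nat.cast_sub hab]; ring
  set X := c₁ * Real.log n + c₂ + c₃ * Real.sqrt (∑ t ∈ Finset.Icc a b, gn t)
  have hlog : 0 ≤ Real.log n := Real.log_natCast_nonneg n
  have hX : 0 ≤ X := by positivity
  have hcover := (blockBounded_of_gc_bound hc₁ hc₃ hg hgc a b).le_two_mul_log_add_one hsup hX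
    ha (show 1 ≤ n by omega) le_rfl (by omega)
  rw [show a + n - 1 = b by omega] at hcover
  rw [← hn]
  calc Reg a b ≤ 2 * (Nat.log 2 n + 1) * X := hcover
    _ ≤ 3 * (1 + Real.log n) * (c₁ * (1 + Real.log n) + (c₂ + c₃ * Real.sqrt _)) :=
        mul_le_mul (two_mul_natLog_two_add_one_le n) (by linarith) hX (by positivity)
    _ = _ := by ring
end
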